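/- Fundamental property of the canonical instantiation: a contextual propositional formula φ is valid (i.e., C(φ) is a tautology for every instantiation C of its context variables) if and only if the ordinary formula κ_φ(φ) obtained by instantiating every context variable with its canonical context is a tautology. -/
import Mathlib


inductive PForm (α : Type) : Type
  | tru : PForm α
  | fls : PForm α
  | atom : α → PForm α
  | natom : α → PForm α
  | and : PForm α → PForm α → PForm α
  | or : PForm α → PForm α → PForm α

variable {α : Type}

def PForm.eval (v : α → Bool) : PForm α → Bool
  | .tru => true
  | .fls => false
  | .atom a => v a
  | .natom a => !(v a)
  | .and φ ψ => φ.eval v && ψ.eval v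
  | .or φ ψ => φ.eval v || ψ.eval v

inductive Ctx (α : Type) : Type
  | tru : Ctx α
  | fls : Ctx α
  | hole : Ctx α
  | atom : α → Ctx α
  | natom : α → Ctx α
  | and : Ctx α → Ctx α → Ctx α
  | or : Ctx α → Ctx α → Ctx α

/-- Fill every hole of a context with a formula. -/
def Ctx.fill : Ctx α → PForm α → PForm α
  | .tru, _ => .tru
  | .fls, _ => .fls
  | .hole, ψ => ψ
  | .atom a, _ => .atom a
  | .natom a, _ => .natom a
  | .and C D, ψ => .and (C.fill ψ) (D.fill ψ)
  | .or C D, ψ => .or (C.fill ψ) (D.fill ψ)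

/-- Negation (De Morgan dual) of an NNF formula. -/
def PForm.negNNF : PForm α → PForm α
  | .tru => .fls
  | .fls => .tru
  | .atom a => .natom a
  | .natom a => .atom a
  | .and φ ψ => .or φ.negNNF ψ.negNNF
  | .or φ ψ => .and φ.negNNF ψ.negNNF

/-- View an ordinary formula as a (hole-free) context. -/
def PForm.toCtx : PForm α → Ctx α
  | .tru => .tru
  | .fls => .fls
  | .atom a => .atom a
  | .natom a => .natom a
  | .and φ ψ => .and φ.toCtx ψ.toCtx
  | .or φ ψ => .or φ.toCtx ψ.toCtx

def bigAndC : List (Ctx α) → Ctx α := List.foldr Ctx.and Ctx.tru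

/-- Contextual propositional formulas over context variables `γ` and atoms `α`. -/
inductive CForm (γ α : Type) : Type
  | tru : CForm γ α
  | fls : CForm γ α
  | atom : α → CForm γ α
  | natom : α → CForm γ α
  | and : CForm γ α → CForm γ α → CForm γ α
  | or : CForm γ α → CForm γ α → CForm γ α
  | capp : γ → CForm γ α → CForm γ α

variable {γ : Type}

/-- Instantiate the context variables (bottom-up). -/
def CForm.inst (σ : γ → Ctx α) : CForm γ α → PForm α
  | .tru => .tru
  | .fls => .fls
  | .atom a => .atom a
  | .natom a => .natom a
  | .and φ ψ => .and (φ.inst σ) (ψ.inst σ)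
  | .or φ ψ => .or (φ.inst σ) (ψ.inst σ)
  | .capp c φ => (σ c).fill (φ.inst σ)

/-- The context subformulas `c[ψ]` of a contextual formula, as pairs `(c, ψ)`. -/
def CForm.csubs : CForm γ α → List (γ × CForm γ α)
  | .and φ ψ => φ.csubs ++ ψ.csubs
  | .or φ ψ => φ.csubs ++ ψ.csubs
  | .capp c φ => (c, φ) :: φ.csubs
  | _ => []

/-- Decontextualization: replace maximal context subformulas by fresh atoms. -/
def CForm.dec : CForm γ α → PForm (α ⊕ γ × CForm γ α)
  | .tru => .tru
  | .fls => .fls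
  | .atom a => .atom (Sum.inl a)
  | .natom a => .natom (Sum.inl a)
  | .and φ ψ => .and φ.dec ψ.dec
  | .or φ ψ => .or φ.dec ψ.dec
  | .capp c φ => .atom (Sum.inr (c, φ))

def CForm.mapAtoms (f : α → δ) : CForm γ α → CForm γ δ
  | .tru => .tru
  | .fls => .fls
  | .atom a => .atom (f a)
  | .natom a => .natom (f a)
  | .and φ ψ => .and (φ.mapAtoms f) (ψ.mapAtoms f)
  | .or φ ψ => .or (φ.mapAtoms f) (ψ.mapAtoms f)
  | .capp c φ => .capp c (φ.mapAtoms f)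

/-- The canonical instantiation `κ_φ`:
`κ_φ(c) := ⋀_{c[ψ] ∈ cs(φ)} ((□ → dec ψ) → p_{c[ψ]})`, written in NNF as
`(□ ∧ ¬ dec ψ) ∨ p_{c[ψ]}`. -/
def kappa [DecidableEq γ] (φ : CForm γ α) (c : γ) : Ctx (α ⊕ γ × CForm γ α) :=
  bigAndC (((φ.csubs).filter (fun x => decide (x.1 = c))).map fun x =>
    Ctx.or (Ctx.and Ctx.hole (PForm.toCtx (PForm.negNNF x.2.dec))) (Ctx.atom (Sum.inr x)))

lemma eval_negNNF (v : α → Bool) (p : PForm α) : p.negNNF.eval v = !p.eval v := by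
  induction p <;> simp [PForm.negNNF, PForm.eval, *]

lemma fill_toCtx (p : PForm α) (ψ : PForm α) : p.toCtx.fill ψ = p := by
  induction p <;> simp [PForm.toCtx, Ctx.fill, *]

lemma bigAndC_eval (v : α → Bool) (L : List (Ctx α)) (X : PForm α) :
    ((bigAndC L).fill X).eval v = true ↔ ∀ C ∈ L, (C.fill X).eval v = true := by
  induction L with
  | nil => simp [bigAndC, Ctx.fill, PForm.eval]
  | cons C L ih =>
    simp only [bigAndC, List.foldr] at *
    simp [Ctx.fill, PForm.eval, ih]

/-- Canonical valuation induced by σ and v. -/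
def vhat (σ : γ → Ctx (α ⊕ γ × CForm γ α)) (v : α ⊕ γ × CForm γ α → Bool) :
    α ⊕ γ × CForm γ α → Bool
  | Sum.inl a => v (Sum.inl a)
  | Sum.inr x => ((σ x.1).fill ((x.2.mapAtoms Sum.inl).inst σ)).eval v

lemma dec_eval (σ : γ → Ctx (α ⊕ γ × CForm γ α)) (v : α ⊕ γ × CForm γ α → Bool)
    (ψ : CForm γ α) :
    PForm.eval (vhat σ v) ψ.dec = PForm.eval v ((ψ.mapAtoms Sum.inl).inst σ) := by
  induction ψ <;> simp [CForm.dec, CForm.mapAtoms, CForm.inst, PForm.eval, vhat, *]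

lemma keyA [DecidableEq γ] (φ : CForm γ α) (σ : γ → Ctx (α ⊕ γ × CForm γ α))
    (v : α ⊕ γ × CForm γ α → Bool) (χ : CForm γ α)
    (sub : ∀ p ∈ χ.csubs, p ∈ φ.csubs)
    (h : ((χ.mapAtoms Sum.inl).inst (kappa φ)).eval (vhat σ v) = true) :
    ((χ.mapAtoms Sum.inl).inst σ).eval v = true := by
  induction χ with
  | tru => simp [CForm.mapAtoms, CForm.inst, PForm.eval]
  | fls => simp [CForm.mapAtoms, CForm.inst, PForm.eval] at h
  | atom a => simpa [CForm.mapAtoms, CForm.inst, PForm.eval, vhat] using h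
  | natom a => simpa [CForm.mapAtoms, CForm.inst, PForm.eval, vhat] using h
  | and φ1 φ2 ih1 ih2 =>
    simp only [CForm.mapAtoms, CForm.inst, PForm.eval, Bool.and_eq_true] at h ⊢
    simp only [CForm.csubs, List.mem_append] at sub
    exact ⟨ih1 (fun p hp => sub p (Or.inl hp)) h.1, ih2 (fun p hp => sub p (Or.inr hp)) h.2⟩
  | or φ1 φ2 ih1 ih2 =>
    simp only [CForm.mapAtoms, CForm.inst, PForm.eval, Bool.or_eq_true] at h ⊢
    simp only [CForm.csubs, List.mem_append] at sub
    rcases h with h | h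
    · exact Or.inl (ih1 (fun p hp => sub p (Or.inl hp)) h)
    · exact Or.inr (ih2 (fun p hp => sub p (Or.inr hp)) h)
  | capp c ψ ih =>
    have hmem : (c, ψ) ∈ φ.csubs := sub (c, ψ) (by simp [CForm.csubs])
    have hsubψ : ∀ p ∈ ψ.csubs, p ∈ φ.csubs := fun p hp =>
      sub p (by simp [CForm.csubs, hp])
    simp only [CForm.mapAtoms, CForm.inst] at h
    rw [kappa, bigAndC_eval] at h
    have hC := h (Ctx.or (Ctx.and Ctx.hole (PForm.toCtx (PForm.negNNF ψ.dec)))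
        (Ctx.atom (Sum.inr (c, ψ))))
      (by
        refine List.mem_map.mpr ⟨(c, ψ), ?_, rfl⟩
        exact List.mem_filter.mpr ⟨hmem, by simp⟩)
    simp only [Ctx.fill, fill_toCtx, PForm.eval, eval_negNNF, Bool.or_eq_true,
      Bool.and_eq_true, Bool.not_eq_true'] at hC
    rcases hC with ⟨hX, hdec⟩ | hp
    · rw [dec_eval] at hdec
      have := ih hsubψ hX
      rw [this] at hdec
      exact absurd hdec (by simp)
    · simp only [CForm.mapAtoms, CForm.inst, vhat] at hp ⊢
      exact hp

/-- Fundamental property of the canonical instantiation (validity). -/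
theorem canonical_instantiation_valid {γ α : Type} [DecidableEq γ] (φ : CForm γ α) :
    (∀ (σ : γ → Ctx (α ⊕ γ × CForm γ α)) (v : α ⊕ γ × CForm γ α → Bool),
        ((φ.mapAtoms Sum.inl).inst σ).eval v = true) ↔
    (∀ v : α ⊕ γ × CForm γ α → Bool,
        ((φ.mapAtoms Sum.inl).inst (kappa φ)).eval v = true) := by
  constructor
  · intro H v
    exact H (kappa φ) v
  · intro H σ v
    have h := H (vhat σ v)
    exact keyA φ σ v φ (fun p hp => hp) h
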